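/- (Theorem 4.4, first bound) Suppose E(X^h) − E(Y) ≤ (λ_k − λ_{k+1})/(2k). Then the Kolmogorov distance satisfies d(Y, X^h) ≤ √( λ_{k+1} ‖C^lᵀC^l‖ / (1 − ‖C^lᵀC^l‖) ), where ‖·‖ is the spectral norm. -/

import Mathlib

/-!
Write `Y = X C`. Since `Y` is `B`-orthonormal, `Cᵀ C = 1`, so `C Cᵀ` is an orthogonal projection
and the row weights `wᵢ = ∑ⱼ Cᵢⱼ²` lie in `[0, 1]` and sum to `k`. As `k E(Y) = ∑ᵢ λᵢ wᵢ`, the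
spectral gap gives `(λ_k - λ_{k+1}) ‖Cˡ‖_F² ≤ k (E(Xʰ) - E(Y)) ≤ (λ_k - λ_{k+1}) / 2`, hence
`g := ‖CˡᵀCˡ‖ ≤ ‖Cˡ‖_F² ≤ 1/2`. As `CʰᵀCʰ = 1 - CˡᵀCˡ`, the block `Cʰ` is invertible, and for
`z = Xʰ α` we pick `y = Y β` with `Cʰ β = α`. Then `z - y = -Xˡ Cˡ β`, whose squared `A`-norm is
at most `λ_{k+1} ‖Cˡ β‖²`, while `‖Cˡ β‖² ≤ g ‖β‖² = g (‖α‖² + ‖Cˡ β‖²)` yields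
`‖Cˡ β‖² ≤ g / (1 - g)`.
-/

open Matrix
open scoped Matrix.Norms.L2Operator

noncomputable def energy {n k : Type*} [Fintype n] [Fintype k]
    (A B : Matrix n n ℝ) (Z : Matrix n k ℝ) : ℝ :=
  (Zᵀ * A * Z).trace / (Zᵀ * B * Z).trace

namespace Matrix

theorem transpose_submatrix_mul_mul_submatrix {m n l : Type*} [Fintype m] (X : Matrix m n ℝ)
    (M : Matrix m m ℝ) (e : l → n) :
    (X.submatrix id e)ᵀ * M * X.submatrix id e = (Xᵀ * M * X).submatrix e e := by
  rw [submatrix_mul _ _ _ id _ Function.bijective_id,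
    submatrix_mul _ _ _ id _ Function.bijective_id, transpose_submatrix, submatrix_id_id]

section Blocks

variable {ι κ o : Type*} [Fintype ι] [Fintype κ]

theorem transpose_mul_self_eq_add_submatrix (C : Matrix (ι ⊕ κ) o ℝ) :
    Cᵀ * C = (C.submatrix Sum.inl id)ᵀ * C.submatrix Sum.inl id +
      (C.submatrix Sum.inr id)ᵀ * C.submatrix Sum.inr id := by
  conv_lhs => rw [← fromRows_toRows C]
  rw [transpose_fromRows, fromCols_mul_fromRows]
  rfl

theorem mulVec_eq_submatrix_inl_add_submatrix_inr (X : Matrix o (ι ⊕ κ) ℝ)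
    (v : ι ⊕ κ → ℝ) :
    X *ᵥ v = X.submatrix id Sum.inl *ᵥ (v ∘ Sum.inl) + X.submatrix id Sum.inr *ᵥ (v ∘ Sum.inr) := by
  conv_lhs => rw [← fromCols_toCols X]
  exact fromCols_mulVec _ _ v

end Blocks

variable {m n k : Type*} [Fintype m] [Fintype n] [Fintype k]

theorem mulVec_dotProduct_mulVec_self (N : Matrix m n ℝ) (v : n → ℝ) :
    (N *ᵥ v) ⬝ᵥ (N *ᵥ v) = v ⬝ᵥ (Nᵀ * N) *ᵥ v := by
  rw [← mulVec_mulVec, dotProduct_mulVec v, vecMul_transpose, dotProduct_comm]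

theorem dotProduct_transpose_mul_mul_mulVec (P : Matrix m n ℝ) (M : Matrix m m ℝ) (v : n → ℝ) :
    v ⬝ᵥ (Pᵀ * M * P) *ᵥ v = (P *ᵥ v) ⬝ᵥ M *ᵥ (P *ᵥ v) := by
  rw [← mulVec_mulVec, ← mulVec_mulVec, dotProduct_mulVec v, vecMul_transpose]

theorem trace_transpose_mul_diagonal_mul [DecidableEq n] (C : Matrix n k ℝ) (d : n → ℝ) :
    (Cᵀ * diagonal d * C).trace = ∑ i, d i * ∑ j, C i j ^ 2 := by
  simp only [trace, diag_apply, mul_apply, transpose_apply, diagonal_apply, mul_ite, mul_zero,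
    Finset.sum_ite_eq', Finset.mem_univ, if_true, Finset.mul_sum]
  rw [Finset.sum_comm]
  exact Finset.sum_congr rfl fun i _ => Finset.sum_congr rfl fun j _ => by ring

theorem trace_transpose_mul_self [DecidableEq n] (C : Matrix n k ℝ) :
    (Cᵀ * C).trace = ∑ i, ∑ j, C i j ^ 2 := by
  simpa using trace_transpose_mul_diagonal_mul C 1

-- `C Cᵀ` is idempotent and symmetric, so `(C Cᵀ)ᵢᵢ = ∑ᵣ (C Cᵀ)ᵢᵣ² ≥ (C Cᵀ)ᵢᵢ²`.
theorem sum_sq_row_le_one_of_transpose_mul_self_eq_one [DecidableEq k] {C : Matrix n k ℝ}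
    (hC : Cᵀ * C = 1) (i : n) : ∑ j, C i j ^ 2 ≤ 1 := by
  set P := C * Cᵀ
  have hPP : P * P = P := by
    simp only [P]
    rw [Matrix.mul_assoc, ← Matrix.mul_assoc Cᵀ, hC, Matrix.one_mul]
  have hdiag : P i i = ∑ j, C i j ^ 2 := by simp [P, mul_apply, sq]
  have hsq : ∑ r, P i r ^ 2 = P i i := by
    conv_rhs => rw [← hPP]
    simp only [mul_apply, sq]
    refine Finset.sum_congr rfl fun r _ => ?_
    congr 1
    simp only [P, mul_apply, transpose_apply, mul_comm]
  have hle : P i i ^ 2 ≤ P i i :=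
    hsq ▸ Finset.single_le_sum (f := fun r => P i r ^ 2) (fun _ _ => sq_nonneg _)
      (Finset.mem_univ i)
  have h0 : 0 ≤ P i i := hdiag ▸ by positivity
  nlinarith

open scoped RealInnerProductSpace in
theorem dotProduct_mulVec_le_l2_opNorm_mul [DecidableEq n] (M : Matrix n n ℝ) (v : n → ℝ) :
    v ⬝ᵥ M *ᵥ v ≤ ‖M‖ * (v ⬝ᵥ v) := by
  set x : EuclideanSpace ℝ n := WithLp.toLp 2 v
  have hx : v ⬝ᵥ v = ‖x‖ ^ 2 := by
    rw [← real_inner_self_eq_norm_sq, EuclideanSpace.inner_eq_star_dotProduct]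
    simp [x]
  calc v ⬝ᵥ M *ᵥ v = ⟪x, toEuclideanCLM (𝕜 := ℝ) M x⟫ := (inner_toEuclideanCLM M x x).symm
    _ ≤ ‖x‖ * ‖toEuclideanCLM (𝕜 := ℝ) M x‖ := real_inner_le_norm _ _
    _ ≤ ‖x‖ * (‖M‖ * ‖x‖) := by gcongr; exact (toEuclideanCLM (𝕜 := ℝ) M).le_opNorm x
    _ = ‖M‖ * (v ⬝ᵥ v) := by rw [hx]; ring

theorem l2_opNorm_le_sqrt_sum_sq [DecidableEq n] (N : Matrix m n ℝ) :
    ‖N‖ ≤ √(∑ i, ∑ j, N i j ^ 2) := by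
  rw [l2_opNorm_def]
  refine ContinuousLinearMap.opNorm_le_bound _ (Real.sqrt_nonneg _) fun x => ?_
  rw [EuclideanSpace.norm_eq, EuclideanSpace.norm_eq, ← Real.sqrt_mul (by positivity)]
  refine Real.sqrt_le_sqrt ?_
  simp only [Real.norm_eq_abs, sq_abs, Finset.sum_mul]
  refine Finset.sum_le_sum fun i _ => ?_
  rw [← Finset.sum_mul]
  exact Finset.sum_mul_sq_le_sq_mul_sq _ _ _

theorem l2_opNorm_transpose_mul_self_le_trace [DecidableEq m] [DecidableEq n]
    (N : Matrix m n ℝ) : ‖Nᵀ * N‖ ≤ (Nᵀ * N).trace := by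
  have h := l2_opNorm_conjTranspose_mul_self N
  rw [conjTranspose_eq_transpose_of_trivial] at h
  rw [h, ← sq, trace_transpose_mul_self]
  calc ‖N‖ ^ 2 ≤ √(∑ i, ∑ j, N i j ^ 2) ^ 2 := by gcongr; exact l2_opNorm_le_sqrt_sum_sq N
    _ = _ := Real.sq_sqrt (by positivity)

theorem mulVec_surjective_of_transpose_mul_self_add_eq_one {ι : Type*} [Fintype ι]
    [DecidableEq ι] {H G : Matrix ι ι ℝ} (hHG : Hᵀ * H + G = 1) (hG : ‖G‖ < 1) :
    Function.Surjective H.mulVec := by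
  refine mulVec_surjective_iff_isUnit.2 (mulVec_injective_iff_isUnit.1 fun v w hvw => ?_)
  set u := v - w
  have hu : H *ᵥ u = 0 := by rw [mulVec_sub, hvw, sub_self]
  have hquad : u ⬝ᵥ u = (H *ᵥ u) ⬝ᵥ (H *ᵥ u) + u ⬝ᵥ G *ᵥ u := by
    rw [mulVec_dotProduct_mulVec_self, ← dotProduct_add, ← add_mulVec, hHG, one_mulVec]
  have hle := dotProduct_mulVec_le_l2_opNorm_mul G u
  rw [hu, dotProduct_zero, zero_add] at hquad
  have huu : u ⬝ᵥ u = 0 := by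
    have := dotProduct_self_star_nonneg u
    simp only [star_trivial] at this
    nlinarith
  exact sub_eq_zero.1 (dotProduct_self_eq_zero.1 huu)

end Matrix

section Blocks

variable {ι κ : Type*} [Fintype ι] [Fintype κ]

theorem sub_mul_sum_inr_le_sum_inl_sub {lam r : ι ⊕ κ → ℝ} {a b : ℝ}
    (ha : ∀ p, a ≤ lam (Sum.inl p)) (hb : ∀ q, lam (Sum.inr q) ≤ b)
    (hr_le : ∀ p, r (Sum.inl p) ≤ 1) (hr_nonneg : ∀ q, 0 ≤ r (Sum.inr q))
    (hr : ∑ i, r i = Fintype.card ι) :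
    (a - b) * ∑ q, r (Sum.inr q) ≤ ∑ p, lam (Sum.inl p) - ∑ i, lam i * r i := by
  rw [Fintype.sum_sum_type] at hr ⊢
  have hdefect : ∑ p, (1 - r (Sum.inl p)) = ∑ q, r (Sum.inr q) := by
    rw [Finset.sum_sub_distrib]
    simp only [Finset.sum_const, Finset.card_univ, nsmul_eq_mul, mul_one]
    linarith
  have hinl : a * ∑ q, r (Sum.inr q) ≤ ∑ p, lam (Sum.inl p) * (1 - r (Sum.inl p)) := by
    rw [← hdefect, Finset.mul_sum]
    exact Finset.sum_le_sum fun p _ =>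
      mul_le_mul_of_nonneg_right (ha p) (sub_nonneg.2 (hr_le p))
  have hinr : ∑ q, lam (Sum.inr q) * r (Sum.inr q) ≤ b * ∑ q, r (Sum.inr q) := by
    rw [Finset.mul_sum]
    exact Finset.sum_le_sum fun q _ => mul_le_mul_of_nonneg_right (hb q) (hr_nonneg q)
  have hsplit : ∑ p, lam (Sum.inl p) * (1 - r (Sum.inl p)) =
      ∑ p, lam (Sum.inl p) - ∑ p, lam (Sum.inl p) * r (Sum.inl p) := by
    rw [← Finset.sum_sub_distrib]
    exact Finset.sum_congr rfl fun p _ => by ring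
  linarith

end Blocks

theorem le_div_one_sub_of_le_mul_add {u g a : ℝ} (hg0 : 0 ≤ g) (hg1 : g < 1) (ha : a ≤ 1)
    (h : u ≤ g * (a + u)) : u ≤ g / (1 - g) := by
  rw [le_div_iff₀ (by linarith)]
  nlinarith

section Energy

variable {n k l : Type*} [Fintype n] [DecidableEq n] [Fintype k] [Fintype l] [DecidableEq l]
  {A B X : Matrix n n ℝ} {lam : n → ℝ}

theorem energy_mul (hXB : Xᵀ * B * X = 1) (hXA : Xᵀ * A * X = diagonal lam) (C : Matrix n k ℝ) :
    energy A B (X * C) = (∑ i, lam i * ∑ j, C i j ^ 2) / ∑ i, ∑ j, C i j ^ 2 := by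
  have hconj (M : Matrix n n ℝ) : (X * C)ᵀ * M * (X * C) = Cᵀ * (Xᵀ * M * X) * C := by
    simp only [transpose_mul, Matrix.mul_assoc]
  rw [energy, hconj, hconj, hXA, hXB, Matrix.mul_one, trace_transpose_mul_diagonal_mul,
    trace_transpose_mul_self]

theorem energy_submatrix (hXB : Xᵀ * B * X = 1) (hXA : Xᵀ * A * X = diagonal lam)
    {e : l → n} (he : Function.Injective e) :
    energy A B (X.submatrix id e) = (∑ p, lam (e p)) / Fintype.card l := by
  rw [energy, transpose_submatrix_mul_mul_submatrix, transpose_submatrix_mul_mul_submatrix, hXA,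
    hXB, submatrix_diagonal _ _ he, submatrix_one _ he, trace_diagonal, trace_one]
  rfl

theorem dotProduct_mulVec_submatrix_self (hXA : Xᵀ * A * X = diagonal lam) {e : l → n}
    (he : Function.Injective e) (w : l → ℝ) :
    (X.submatrix id e *ᵥ w) ⬝ᵥ A *ᵥ (X.submatrix id e *ᵥ w) = ∑ q, lam (e q) * w q ^ 2 := by
  rw [← dotProduct_transpose_mul_mul_mulVec, transpose_submatrix_mul_mul_submatrix, hXA,
    submatrix_diagonal _ _ he]
  simp only [dotProduct, mulVec_diagonal, Function.comp_apply, sq]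
  exact Finset.sum_congr rfl fun q _ => by ring

end Energy

section GeneralizedEigenbasis

variable {ι κ : Type*} [Fintype ι] [DecidableEq ι] [Fintype κ] [DecidableEq κ]
  {A B X : Matrix (ι ⊕ κ) (ι ⊕ κ) ℝ} {lam : ι ⊕ κ → ℝ} {C : Matrix (ι ⊕ κ) ι ℝ} {a b : ℝ}

theorem sum_sq_inr_le_half [Nonempty ι] (hXB : Xᵀ * B * X = 1)
    (hXA : Xᵀ * A * X = diagonal lam) (hC : Cᵀ * C = 1) (ha : ∀ p, a ≤ lam (Sum.inl p))
    (hb : ∀ q, lam (Sum.inr q) ≤ b) (hab : b < a)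
    (hsmall : energy A B (X.submatrix id Sum.inl) - energy A B (X * C) ≤
      (a - b) / (2 * Fintype.card ι)) :
    ∑ q, ∑ j, C (Sum.inr q) j ^ 2 ≤ 1 / 2 := by
  have hcard : ∑ i, ∑ j, C i j ^ 2 = Fintype.card ι := by
    rw [← trace_transpose_mul_self, hC, trace_one]
  have hgap := sub_mul_sum_inr_le_sum_inl_sub (r := fun i => ∑ j, C i j ^ 2) ha hb
    (fun p => sum_sq_row_le_one_of_transpose_mul_self_eq_one hC _) (fun q => by positivity) hcard
  have hpos : (0 : ℝ) < Fintype.card ι := Nat.cast_pos.2 Fintype.card_pos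
  rw [energy_submatrix hXB hXA Sum.inl_injective, energy_mul hXB hXA, hcard, div_sub_div_same,
    mul_comm, ← div_div, div_right_comm, div_le_div_iff_of_pos_right hpos] at hsmall
  nlinarith

theorem exists_dotProduct_mulVec_sub_le (hXA : Xᵀ * A * X = diagonal lam)
    (hb : ∀ q, lam (Sum.inr q) ≤ b) (hb0 : 0 ≤ b) (hC : Cᵀ * C = 1)
    (hG : ‖(C.submatrix Sum.inr id)ᵀ * C.submatrix Sum.inr id‖ < 1) {α : ι → ℝ}
    (hα : α ⬝ᵥ α ≤ 1) :
    ∃ β, (X.submatrix id Sum.inl *ᵥ α - (X * C) *ᵥ β) ⬝ᵥ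
        A *ᵥ (X.submatrix id Sum.inl *ᵥ α - (X * C) *ᵥ β) ≤
      b * ‖(C.submatrix Sum.inr id)ᵀ * C.submatrix Sum.inr id‖ /
        (1 - ‖(C.submatrix Sum.inr id)ᵀ * C.submatrix Sum.inr id‖) := by
  set Ch := C.submatrix Sum.inl id
  set Cl := C.submatrix Sum.inr id
  have hsplit : Chᵀ * Ch + Clᵀ * Cl = 1 := (transpose_mul_self_eq_add_submatrix C).symm.trans hC
  obtain ⟨β, hβ⟩ := mulVec_surjective_of_transpose_mul_self_add_eq_one hsplit hG α
  refine ⟨β, ?_⟩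
  set w := Cl *ᵥ β
  have hdiff : X.submatrix id Sum.inl *ᵥ α - (X * C) *ᵥ β = X.submatrix id Sum.inr *ᵥ (-w) := by
    rw [← mulVec_mulVec, mulVec_eq_submatrix_inl_add_submatrix_inr, mulVec_neg, ← hβ]
    exact sub_add_cancel_left _ _
  have hw : w ⬝ᵥ w ≤ ‖Clᵀ * Cl‖ / (1 - ‖Clᵀ * Cl‖) := by
    refine le_div_one_sub_of_le_mul_add (norm_nonneg _) hG hα ?_
    have hββ : β ⬝ᵥ β = α ⬝ᵥ α + w ⬝ᵥ w := by
      rw [← hβ, mulVec_dotProduct_mulVec_self, mulVec_dotProduct_mulVec_self, ← dotProduct_add,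
        ← add_mulVec, hsplit, one_mulVec]
    rw [← hββ, mulVec_dotProduct_mulVec_self]
    exact dotProduct_mulVec_le_l2_opNorm_mul _ β
  rw [hdiff, dotProduct_mulVec_submatrix_self hXA Sum.inr_injective, mul_div_assoc]
  calc ∑ q, lam (Sum.inr q) * (-w) q ^ 2 ≤ ∑ q, b * w q ^ 2 :=
        Finset.sum_le_sum fun q _ => by
          rw [Pi.neg_apply, neg_sq]; exact mul_le_mul_of_nonneg_right (hb q) (sq_nonneg _)
    _ = b * (w ⬝ᵥ w) := by simp only [dotProduct, ← Finset.mul_sum, sq]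
    _ ≤ _ := mul_le_mul_of_nonneg_left hw hb0

end GeneralizedEigenbasis

theorem stmt_14_general (k m : ℕ)
    (A B : Matrix (Fin (k+1) ⊕ Fin (m+1)) (Fin (k+1) ⊕ Fin (m+1)) ℝ)
    (lam : Fin (k+1) ⊕ Fin (m+1) → ℝ)
    (X : Matrix (Fin (k+1) ⊕ Fin (m+1)) (Fin (k+1) ⊕ Fin (m+1)) ℝ)
    (hXB : Xᵀ * B * X = 1)
    (hXA : Xᵀ * A * X = Matrix.diagonal lam)
    (hmono_h : ∀ i j : Fin (k+1), i ≤ j → lam (Sum.inl j) ≤ lam (Sum.inl i))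
    (hmono_l : ∀ i j : Fin (m+1), i ≤ j → lam (Sum.inr j) ≤ lam (Sum.inr i))
    (hgap : lam (Sum.inr 0) < lam (Sum.inl (Fin.last k)))
    (hpos : ∀ i, 0 < lam i)
    (Y C : Matrix (Fin (k+1) ⊕ Fin (m+1)) (Fin (k+1)) ℝ)
    (hYB : Yᵀ * B * Y = 1)
    (hYC : Y = X * C)
    (hsmall : energy A B (X.submatrix id Sum.inl) - energy A B Y ≤
      (lam (Sum.inl (Fin.last k)) - lam (Sum.inr 0)) / (2 * ((k : ℝ) + 1))) :
    (⨆ α : {a : Fin (k+1) → ℝ // ∑ i, a i ^ 2 ≤ 1}, ⨅ β : Fin (k+1) → ℝ,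
        Real.sqrt (((X.submatrix id Sum.inl) *ᵥ (α : Fin (k+1) → ℝ) - Y *ᵥ β) ⬝ᵥ
          A *ᵥ ((X.submatrix id Sum.inl) *ᵥ (α : Fin (k+1) → ℝ) - Y *ᵥ β))) ≤
      Real.sqrt (lam (Sum.inr 0) *
        ‖(C.submatrix Sum.inr id)ᵀ * (C.submatrix Sum.inr id)‖ /
        (1 - ‖(C.submatrix Sum.inr id)ᵀ * (C.submatrix Sum.inr id)‖)) := by
  subst hYC
  have hC : Cᵀ * C = 1 := by
    rwa [transpose_mul, show Cᵀ * Xᵀ * B * (X * C) = Cᵀ * (Xᵀ * B * X) * C by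
      simp only [Matrix.mul_assoc], hXB, Matrix.mul_one] at hYB
  have ha (p : Fin (k+1)) : lam (Sum.inl (Fin.last k)) ≤ lam (Sum.inl p) :=
    hmono_h p _ (Fin.le_last p)
  have hb (q : Fin (m+1)) : lam (Sum.inr q) ≤ lam (Sum.inr 0) := hmono_l 0 q (Fin.zero_le q)
  have hlow := sum_sq_inr_le_half hXB hXA hC ha hb hgap (by simpa using hsmall)
  have hG : ‖(C.submatrix Sum.inr id)ᵀ * C.submatrix Sum.inr id‖ < 1 := by
    refine (l2_opNorm_transpose_mul_self_le_trace _).trans_lt ?_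
    rw [trace_transpose_mul_self]
    exact hlow.trans_lt (by norm_num)
  have : Nonempty {a : Fin (k+1) → ℝ // ∑ i, a i ^ 2 ≤ 1} := ⟨⟨0, by simp⟩⟩
  refine ciSup_le fun α => ?_
  obtain ⟨β, hβ⟩ := exists_dotProduct_mulVec_sub_le hXA hb (hpos _).le hC hG (α := α)
    (by simpa [dotProduct, sq] using α.2)
  exact ciInf_le_of_le ⟨0, fun _ ⟨_, h⟩ => h ▸ Real.sqrt_nonneg _⟩ β (Real.sqrt_le_sqrt hβ)

/-- Theorem 4.4 (first bound): if `E(Xʰ) − E(Y) ≤ (λ_k − λ_{k+1})/(2k)` then the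
Kolmogorov distance `d(Y, Xʰ) = sup_{‖α‖≤1} inf_β ‖Xʰα − Yβ‖_A` satisfies
`d(Y, Xʰ) ≤ √(λ_{k+1} ‖CˡᵀCˡ‖ / (1 − ‖CˡᵀCˡ‖))`, with `‖·‖` the spectral norm.
The high block has size `k+1` and the low block size `m+1`. -/
theorem stmt_14 (k m : ℕ)
    (A B : Matrix (Fin (k+1) ⊕ Fin (m+1)) (Fin (k+1) ⊕ Fin (m+1)) ℝ)
    (hA : A.PosDef) (hB : B.PosDef)
    (lam : Fin (k+1) ⊕ Fin (m+1) → ℝ)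
    (X : Matrix (Fin (k+1) ⊕ Fin (m+1)) (Fin (k+1) ⊕ Fin (m+1)) ℝ)
    (heig : A * X = B * X * Matrix.diagonal lam)
    (hXB : Xᵀ * B * X = 1)
    (hXA : Xᵀ * A * X = Matrix.diagonal lam)
    (hmono_h : ∀ i j : Fin (k+1), i ≤ j → lam (Sum.inl j) ≤ lam (Sum.inl i))
    (hmono_l : ∀ i j : Fin (m+1), i ≤ j → lam (Sum.inr j) ≤ lam (Sum.inr i))
    (hgap : lam (Sum.inr 0) < lam (Sum.inl (Fin.last k)))
    (hpos : ∀ i, 0 < lam i)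
    (Y C : Matrix (Fin (k+1) ⊕ Fin (m+1)) (Fin (k+1)) ℝ)
    (hYB : Yᵀ * B * Y = 1)
    (hYC : Y = X * C)
    (hsmall : energy A B (X.submatrix id Sum.inl) - energy A B Y ≤
      (lam (Sum.inl (Fin.last k)) - lam (Sum.inr 0)) / (2 * ((k : ℝ) + 1))) :
    (⨆ α : {a : Fin (k+1) → ℝ // ∑ i, a i ^ 2 ≤ 1}, ⨅ β : Fin (k+1) → ℝ,
        Real.sqrt (((X.submatrix id Sum.inl) *ᵥ (α : Fin (k+1) → ℝ) - Y *ᵥ β) ⬝ᵥ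
          A *ᵥ ((X.submatrix id Sum.inl) *ᵥ (α : Fin (k+1) → ℝ) - Y *ᵥ β))) ≤
      Real.sqrt (lam (Sum.inr 0) *
        ‖(C.submatrix Sum.inr id)ᵀ * (C.submatrix Sum.inr id)‖ /
        (1 - ‖(C.submatrix Sum.inr id)ᵀ * (C.submatrix Sum.inr id)‖)) :=
  stmt_14_general k m A B lam X hXB hXA hmono_h hmono_l hgap hpos Y C hYB hYC hsmall
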